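/- arXiv:2005.07030 — 7 statements merged into one kernel-verified Lean document; each statement's English description precedes it below -/
import Mathlib

section
/- Let Q be a symmetric real n×n matrix with zero diagonal and b ∈ ℝⁿ, and let f(x) = xᵀQx + bᵀx. Then the minimum of f over the solid hypercube [0,1]ⁿ is attained at a binary vertex: there exists p ∈ {0,1}ⁿ such that f(p) ≤ f(x) for all x ∈ [0,1]ⁿ. In particular the minimum of f over [0,1]ⁿ equals the minimum of f over {0,1}ⁿ. -/
/-!
Since `Q` has zero diagonal, `f` is affine in each coordinate separately, and a concave function
on `[0, 1]` is minimised at `0` or `1`. Rounding the coordinates of a point of the cube one at a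
time to `0` or `1` therefore never increases `f`, so the minimum of `f` over the finitely many
vertices is also its minimum over the whole cube.
-/

open Finset Function

section CoordinateExpansion

variable {ι R : Type*} [Fintype ι] [DecidableEq ι] [CommRing R]

omit [Fintype ι] in
theorem update_eq_update_zero_add_single (x : ι → R) (i : ι) (t : R) :
    update x i t = update x i 0 + Pi.single i t := by
  ext j
  rcases eq_or_ne j i with rfl | h <;> simp [*]

theorem sum_sum_mul_add_single_mul_add_single (Q : Matrix ι ι R) (y : ι → R) (i : ι) (t : R) :
    ∑ j, ∑ k, Q j k * (y + Pi.single i t : ι → R) j * (y + Pi.single i t : ι → R) k =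
      ∑ j, ∑ k, Q j k * y j * y k + t * ∑ j, (Q i j + Q j i) * y j + Q i i * t ^ 2 := by
  simp only [Pi.add_apply, mul_add, add_mul, sum_add_distrib, Pi.single_apply, mul_ite, ite_mul,
    mul_zero, zero_mul, sum_ite_eq', sum_ite_irrel, sum_const_zero, Finset.mem_univ, if_true,
    Finset.mul_sum]
  ring_nf

theorem sum_mul_add_single (b y : ι → R) (i : ι) (t : R) :
    ∑ j, b j * (y + Pi.single i t : ι → R) j = ∑ j, b j * y j + b i * t := by
  simp [mul_add, sum_add_distrib, Pi.single_apply]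

end CoordinateExpansion

theorem concaveOn_update_of_diag_eq_zero {ι : Type*} [Fintype ι] [DecidableEq ι]
    {Q : Matrix ι ι ℝ} (hQdiag : ∀ i, Q i i = 0) (b : ι → ℝ) {f : (ι → ℝ) → ℝ}
    (hf : ∀ x, f x = (∑ i, ∑ j, Q i j * x i * x j) + ∑ i, b i * x i) (x : ι → ℝ) (i : ι) :
    ConcaveOn ℝ Set.univ fun t => f (update x i t) := by
  set y := update x i 0
  have affine : (fun t => f (update x i t)) =
      fun t => t * ((∑ j, (Q i j + Q j i) * y j) + b i) + f y := by
    funext t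
    rw [update_eq_update_zero_add_single, hf, hf, sum_sum_mul_add_single_mul_add_single,
      sum_mul_add_single, hQdiag]
    ring
  rw [affine]
  exact ((LinearMap.mulRight ℝ _).concaveOn convex_univ).add_const _

section Cube

variable {ι : Type*} [Fintype ι] [DecidableEq ι] {f : (ι → ℝ) → ℝ}

theorem exists_vertex_le_of_concaveOn_update
    (hf : ∀ x, (∀ i, x i ∈ Set.Icc (0 : ℝ) 1) → ∀ i,
      ConcaveOn ℝ (Set.Icc 0 1) fun t => f (update x i t))
    {x : ι → ℝ} (hx : ∀ i, x i ∈ Set.Icc (0 : ℝ) 1) :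
    ∃ p : ι → ℝ, (∀ i, p i = 0 ∨ p i = 1) ∧ f p ≤ f x := by
  suffices rounding : ∀ s : Finset ι, ∀ x : ι → ℝ, (∀ i, x i ∈ Set.Icc (0 : ℝ) 1) →
      (∀ i ∉ s, x i = 0 ∨ x i = 1) → ∃ p : ι → ℝ, (∀ i, p i = 0 ∨ p i = 1) ∧ f p ≤ f x from
    rounding univ x hx fun i hi => absurd (Finset.mem_univ i) hi
  intro s
  induction s using Finset.induction_on with
  | empty => exact fun x _ hbin => ⟨x, fun i => hbin i (notMem_empty i), le_rfl⟩
  | insert a s ha ih =>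
    intro x hx hbin
    obtain ⟨t, ht, hle⟩ : ∃ t : ℝ, (t = 0 ∨ t = 1) ∧ f (update x a t) ≤ f x := by
      have hmin := (hf x hx a).min_le_of_mem_Icc (Set.left_mem_Icc.2 zero_le_one)
        (Set.right_mem_Icc.2 zero_le_one) (hx a)
      rw [update_eq_self] at hmin
      rcases min_le_iff.1 hmin with h | h
      exacts [⟨0, .inl rfl, h⟩, ⟨1, .inr rfl, h⟩]
    have ht_mem : t ∈ Set.Icc (0 : ℝ) 1 := by rcases ht with rfl | rfl <;> simp
    obtain ⟨p, hp, hpt⟩ := ih (update x a t)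
      (forall_update_iff x (p := fun _ y => y ∈ Set.Icc (0 : ℝ) 1) |>.2
        ⟨ht_mem, fun i _ => hx i⟩)
      (forall_update_iff x (p := fun j y => j ∉ s → y = 0 ∨ y = 1) |>.2
        ⟨fun _ => ht, fun i hia his => hbin i (by simp [hia, his])⟩)
    exact ⟨p, hp, hpt.trans hle⟩

theorem exists_vertex_forall_cube_le_of_concaveOn_update
    (hf : ∀ x, (∀ i, x i ∈ Set.Icc (0 : ℝ) 1) → ∀ i,
      ConcaveOn ℝ (Set.Icc 0 1) fun t => f (update x i t)) :
    ∃ p : ι → ℝ, (∀ i, p i = 0 ∨ p i = 1) ∧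
      ∀ x : ι → ℝ, (∀ i, x i ∈ Set.Icc (0 : ℝ) 1) → f p ≤ f x := by
  obtain ⟨p, hp, hmin⟩ := Set.exists_min_image {x : ι → ℝ | ∀ i, x i = 0 ∨ x i = 1} f
    (Set.Finite.pi' fun _ => Set.toFinite {0, 1}) ⟨0, fun _ => .inl rfl⟩
  refine ⟨p, hp, fun x hx => ?_⟩
  obtain ⟨q, hq, hqx⟩ := exists_vertex_le_of_concaveOn_update hf hx
  exact (hmin q hq).trans hqx

end Cube

theorem ubqp_min_attained_at_vertex_general (n : ℕ) (Q : Matrix (Fin n) (Fin n) ℝ)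
    (hQdiag : ∀ i, Q i i = 0) (b : Fin n → ℝ)
    (f : (Fin n → ℝ) → ℝ)
    (hf : ∀ x, f x = (∑ i, ∑ j, Q i j * x i * x j) + ∑ i, b i * x i) :
    (∃ p : Fin n → ℝ, (∀ i, p i = 0 ∨ p i = 1) ∧
      ∀ x : Fin n → ℝ, (∀ i, x i ∈ Set.Icc (0 : ℝ) 1) → f p ≤ f x) ∧
    sInf (f '' {x | ∀ i, x i ∈ Set.Icc (0 : ℝ) 1}) =
      sInf (f '' {x | ∀ i, x i = 0 ∨ x i = 1}) := by
  obtain ⟨p, hp, hmin⟩ := exists_vertex_forall_cube_le_of_concaveOn_update fun x _ i =>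
    (concaveOn_update_of_diag_eq_zero hQdiag b hf x i).subset (Set.subset_univ _)
      (convex_Icc 0 1)
  have vertex_mem_cube : ∀ x : Fin n → ℝ, (∀ i, x i = 0 ∨ x i = 1) →
      ∀ i, x i ∈ Set.Icc (0 : ℝ) 1 := fun x hx i => by rcases hx i with h | h <;> simp [h]
  refine ⟨⟨p, hp, hmin⟩, ?_⟩
  have least_on_cube : IsLeast (f '' {x | ∀ i, x i ∈ Set.Icc (0 : ℝ) 1}) (f p) :=
    ⟨⟨p, vertex_mem_cube p hp, rfl⟩, Set.forall_mem_image.2 hmin⟩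
  have least_on_vertices : IsLeast (f '' {x | ∀ i, x i = 0 ∨ x i = 1}) (f p) :=
    ⟨⟨p, hp, rfl⟩, Set.forall_mem_image.2 fun x hx => hmin x (vertex_mem_cube x hx)⟩
  rw [least_on_cube.csInf_eq, least_on_vertices.csInf_eq]

theorem ubqp_min_attained_at_vertex (n : ℕ) (Q : Matrix (Fin n) (Fin n) ℝ)
    (hQsymm : Q.IsSymm) (hQdiag : ∀ i, Q i i = 0) (b : Fin n → ℝ)
    (f : (Fin n → ℝ) → ℝ)
    (hf : ∀ x, f x = (∑ i, ∑ j, Q i j * x i * x j) + ∑ i, b i * x i) :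
    (∃ p : Fin n → ℝ, (∀ i, p i = 0 ∨ p i = 1) ∧
      ∀ x : Fin n → ℝ, (∀ i, x i ∈ Set.Icc (0 : ℝ) 1) → f p ≤ f x) ∧
    sInf (f '' {x | ∀ i, x i ∈ Set.Icc (0 : ℝ) 1}) =
      sInf (f '' {x | ∀ i, x i = 0 ∨ x i = 1}) :=
  ubqp_min_attained_at_vertex_general n Q hQdiag b f hf
end

section
/- φ([0,1]³) ⊆ C₃, i.e. for every x ∈ [0,1]³ the point φ(x) lies in the convex hull of the images under φ of the eight binary vertices of the cube. -/
/-- The map `φ : ℝ³ → ℝ⁶` sending `x` to the primary variables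
`(u₁₂, u₁₃, u₂₃, v₁₂, v₁₃, v₂₃)`. -/
noncomputable def phi (x : Fin 3 → ℝ) : Fin 6 → ℝ :=
  ![(x 0 + 2 * x 0 * x 1 + x 1) / 2,
    (x 0 + 2 * x 0 * x 2 + x 2) / 2,
    (x 1 + 2 * x 1 * x 2 + x 2) / 2,
    (x 0 - 2 * x 0 * x 1 + x 1) / 2,
    (x 0 - 2 * x 0 * x 2 + x 2) / 2,
    (x 1 - 2 * x 1 * x 2 + x 2) / 2]

noncomputable def vert (b : Bool × Bool × Bool) : Fin 3 → ℝ :=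
  ![if b.1 then 1 else 0, if b.2.1 then 1 else 0, if b.2.2 then 1 else 0]

theorem phi_image_subset_convexHull (x : Fin 3 → ℝ)
    (hx : ∀ i, x i ∈ Set.Icc (0 : ℝ) 1) :
    phi x ∈ convexHull ℝ (phi '' {p : Fin 3 → ℝ | ∀ i, p i = 0 ∨ p i = 1}) := by
  set w : Bool × Bool × Bool → ℝ := fun b =>
    (if b.1 then x 0 else 1 - x 0) * (if b.2.1 then x 1 else 1 - x 1) *
      (if b.2.2 then x 2 else 1 - x 2) with hw
  have key : phi x = ∑ b : Bool × Bool × Bool, w b • phi (vert b) := by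
    funext j
    have h0 := (hx 0); have h1 := (hx 1); have h2 := (hx 2)
    simp only [Finset.sum_apply, Pi.smul_apply, smul_eq_mul, Fintype.sum_prod_type,
      Fintype.sum_bool, hw]
    fin_cases j <;> simp [phi, vert, show (5:Fin 6) = Fin.succ 4 from rfl, Matrix.cons_val_succ] <;> ring
  rw [key]
  apply (convex_convexHull ℝ _).sum_mem
  · intro b _
    have h0 := (hx 0); have h1 := (hx 1); have h2 := (hx 2)
    simp only [Set.mem_Icc] at h0 h1 h2
    apply mul_nonneg; apply mul_nonneg
    all_goals split <;> linarith [h0.1, h0.2, h1.1, h1.2, h2.1, h2.2]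
  · simp only [hw, Fintype.sum_prod_type, Fintype.sum_bool, if_true, if_false,
      Bool.false_eq_true]
    ring
  · intro b _
    exact subset_convexHull ℝ _ ⟨vert b, fun i => by
      fin_cases i <;> rcases b with ⟨b1, b2, b3⟩ <;> cases b1 <;> cases b2 <;> cases b3 <;>
        simp [vert], rfl⟩
end

section
/- Let x ∈ [0,1]³ and let t be any real number with max{0, m₁(x)} ≤ t ≤ min{M₁(x), M₂(x), M₃(x), 1}. Define coefficients indexed by the binary vertices: λ₍₀,₀,₀₎ = 1 − t − s(x), λ₍₀,₀,₁₎ = t + x₃ − x₁x₃ − x₂x₃, λ₍₀,₁,₀₎ = t + x₂ − x₁x₂ − x₂x₃, λ₍₀,₁,₁₎ = x₂x₃ − t, λ₍₁,₀,₀₎ = t + x₁ − x₁x₂ − x₁x₃, λ₍₁,₀,₁₎ = x₁x₃ − t, λ₍₁,₁,₀₎ = x₁x₂ − t, λ₍₁,₁,₁₎ = t. Then all eight coefficients λ_p are nonnegative, Σ_{p ∈ {0,1}³} λ_p = 1, and Σ_{p ∈ {0,1}³} λ_p · φ(p) = φ(x). -/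
/-- `s(x) = x₁+x₂+x₃−x₁x₂−x₁x₃−x₂x₃`. -/
def sPoly (x : Fin 3 → ℝ) : ℝ :=
  x 0 + x 1 + x 2 - x 0 * x 1 - x 0 * x 2 - x 1 * x 2

/-- `m₁(x) = max{−x₁(1−x₂−x₃), −x₂(1−x₁−x₃), −x₃(1−x₁−x₂)}`. -/
def m1 (x : Fin 3 → ℝ) : ℝ :=
  max (max (-(x 0) * (1 - x 1 - x 2)) (-(x 1) * (1 - x 0 - x 2)))
    (-(x 2) * (1 - x 0 - x 1))

/-- `M₁(x) = min{1−x₁(1−x₂−x₃), 1−x₂(1−x₁−x₃), 1−x₃(1−x₁−x₂)}`. -/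
def M1 (x : Fin 3 → ℝ) : ℝ :=
  min (min (1 - x 0 * (1 - x 1 - x 2)) (1 - x 1 * (1 - x 0 - x 2)))
    (1 - x 2 * (1 - x 0 - x 1))

/-- `M₂(x) = min{x₁x₂, x₁x₃, x₂x₃}`. -/
def M2 (x : Fin 3 → ℝ) : ℝ :=
  min (min (x 0 * x 1) (x 0 * x 2)) (x 1 * x 2)

/-- `M₃(x) = 1−s(x)`. -/
def M3 (x : Fin 3 → ℝ) : ℝ := 1 - sPoly x

/-! `φ` is linear in the moment vector `(x₁, x₂, x₃, x₁x₂, x₁x₃, x₂x₃)`, and for every `t` the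
weights `λ_p` are the signed measure on `{0,1}³` with `λ₍₁,₁,₁₎ = t` that has the same first and
second moments as `x`; hence `∑ λ_p φ(p) = φ(x)` by linearity. Each constraint on `t` is exactly
the nonnegativity of some `λ_p`: `0 ≤ t` of `λ₍₁,₁,₁₎`, `m₁` of the three weights with one
coordinate `1`, `M₂` of the three with two, and `M₃` of `λ₍₀,₀,₀₎`. -/

def moments (x : Fin 3 → ℝ) : Fin 6 → ℝ :=
  ![x 0, x 1, x 2, x 0 * x 1, x 0 * x 2, x 1 * x 2]

noncomputable def phiMatrix : Matrix (Fin 6) (Fin 6) ℝ :=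
  !![1/2, 1/2, 0, 1, 0, 0;
     1/2, 0, 1/2, 0, 1, 0;
     0, 1/2, 1/2, 0, 0, 1;
     1/2, 1/2, 0, -1, 0, 0;
     1/2, 0, 1/2, 0, -1, 0;
     0, 1/2, 1/2, 0, 0, -1]

lemma phi_eq_mulVecLin_moments (x : Fin 3 → ℝ) :
    phi x = phiMatrix.mulVecLin (moments x) := by
  funext i
  fin_cases i <;>
    simp [phi, phiMatrix, moments, Matrix.mulVec, dotProduct, Fin.sum_univ_succ] <;> ring

lemma vertex_combination_moments (x : Fin 3 → ℝ) (t : ℝ) :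
    (1 - t - sPoly x) • moments ![0, 0, 0] +
      (t + x 2 - x 0 * x 2 - x 1 * x 2) • moments ![0, 0, 1] +
      (t + x 1 - x 0 * x 1 - x 1 * x 2) • moments ![0, 1, 0] +
      (x 1 * x 2 - t) • moments ![0, 1, 1] +
      (t + x 0 - x 0 * x 1 - x 0 * x 2) • moments ![1, 0, 0] +
      (x 0 * x 2 - t) • moments ![1, 0, 1] +
      (x 0 * x 1 - t) • moments ![1, 1, 0] + t • moments ![1, 1, 1] = moments x := by
  funext i
  fin_cases i <;> simp [moments] <;> ring

lemma vertex_weights_sum (x : Fin 3 → ℝ) (t : ℝ) :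
    (1 - t - sPoly x) + (t + x 2 - x 0 * x 2 - x 1 * x 2) + (t + x 1 - x 0 * x 1 - x 1 * x 2) +
      (x 1 * x 2 - t) + (t + x 0 - x 0 * x 1 - x 0 * x 2) + (x 0 * x 2 - t) + (x 0 * x 1 - t) + t
      = 1 := by
  unfold sPoly
  ring

lemma vertex_weights_nonneg {x : Fin 3 → ℝ} {t : ℝ} (h0 : 0 ≤ t) (hm1 : m1 x ≤ t)
    (hM2 : t ≤ M2 x) (hM3 : t ≤ M3 x) :
    0 ≤ 1 - t - sPoly x ∧ 0 ≤ t + x 2 - x 0 * x 2 - x 1 * x 2 ∧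
      0 ≤ t + x 1 - x 0 * x 1 - x 1 * x 2 ∧ 0 ≤ x 1 * x 2 - t ∧
      0 ≤ t + x 0 - x 0 * x 1 - x 0 * x 2 ∧ 0 ≤ x 0 * x 2 - t ∧ 0 ≤ x 0 * x 1 - t ∧ 0 ≤ t := by
  simp only [m1, max_le_iff] at hm1
  simp only [M2, le_min_iff] at hM2
  unfold M3 at hM3
  obtain ⟨⟨hm1₀, hm1₁⟩, hm1₂⟩ := hm1
  obtain ⟨⟨hM2₀₁, hM2₀₂⟩, hM2₁₂⟩ := hM2
  refine ⟨?_, ?_, ?_, ?_, ?_, ?_, ?_, ?_⟩ <;> linarith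

theorem explicit_convex_coefficients_general (x : Fin 3 → ℝ)
    (t : ℝ)
    (ht₁ : max 0 (m1 x) ≤ t)
    (ht₂ : t ≤ min (min (min (M1 x) (M2 x)) (M3 x)) 1)
    (l000 l001 l010 l011 l100 l101 l110 l111 : ℝ)
    (h000 : l000 = 1 - t - sPoly x)
    (h001 : l001 = t + x 2 - x 0 * x 2 - x 1 * x 2)
    (h010 : l010 = t + x 1 - x 0 * x 1 - x 1 * x 2)
    (h011 : l011 = x 1 * x 2 - t)
    (h100 : l100 = t + x 0 - x 0 * x 1 - x 0 * x 2)
    (h101 : l101 = x 0 * x 2 - t)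
    (h110 : l110 = x 0 * x 1 - t)
    (h111 : l111 = t) :
    (0 ≤ l000 ∧ 0 ≤ l001 ∧ 0 ≤ l010 ∧ 0 ≤ l011 ∧
      0 ≤ l100 ∧ 0 ≤ l101 ∧ 0 ≤ l110 ∧ 0 ≤ l111) ∧
    l000 + l001 + l010 + l011 + l100 + l101 + l110 + l111 = 1 ∧
    l000 • phi ![0, 0, 0] + l001 • phi ![0, 0, 1] + l010 • phi ![0, 1, 0] +
      l011 • phi ![0, 1, 1] + l100 • phi ![1, 0, 0] + l101 • phi ![1, 0, 1] +
      l110 • phi ![1, 1, 0] + l111 • phi ![1, 1, 1] = phi x := by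
  subst l000 l001 l010 l011 l100 l101 l110 l111
  have hM2 : t ≤ M2 x :=
    ht₂.trans <| (min_le_left _ _).trans <| (min_le_left _ _).trans (min_le_right _ _)
  have hM3 : t ≤ M3 x := ht₂.trans <| (min_le_left _ _).trans (min_le_right _ _)
  refine ⟨vertex_weights_nonneg (le_of_max_le_left ht₁) (le_of_max_le_right ht₁) hM2 hM3,
    vertex_weights_sum x t, ?_⟩
  simp only [phi_eq_mulVecLin_moments, ← map_smul, ← map_add, vertex_combination_moments]

theorem explicit_convex_coefficients (x : Fin 3 → ℝ)
    (hx : ∀ i, x i ∈ Set.Icc (0 : ℝ) 1) (t : ℝ)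
    (ht₁ : max 0 (m1 x) ≤ t)
    (ht₂ : t ≤ min (min (min (M1 x) (M2 x)) (M3 x)) 1)
    (l000 l001 l010 l011 l100 l101 l110 l111 : ℝ)
    (h000 : l000 = 1 - t - sPoly x)
    (h001 : l001 = t + x 2 - x 0 * x 2 - x 1 * x 2)
    (h010 : l010 = t + x 1 - x 0 * x 1 - x 1 * x 2)
    (h011 : l011 = x 1 * x 2 - t)
    (h100 : l100 = t + x 0 - x 0 * x 1 - x 0 * x 2)
    (h101 : l101 = x 0 * x 2 - t)
    (h110 : l110 = x 0 * x 1 - t)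
    (h111 : l111 = t) :
    (0 ≤ l000 ∧ 0 ≤ l001 ∧ 0 ≤ l010 ∧ 0 ≤ l011 ∧
      0 ≤ l100 ∧ 0 ≤ l101 ∧ 0 ≤ l110 ∧ 0 ≤ l111) ∧
    l000 + l001 + l010 + l011 + l100 + l101 + l110 + l111 = 1 ∧
    l000 • phi ![0, 0, 0] + l001 • phi ![0, 0, 1] + l010 • phi ![0, 1, 0] +
      l011 • phi ![0, 1, 1] + l100 • phi ![1, 0, 0] + l101 • phi ![1, 0, 1] +
      l110 • phi ![1, 1, 0] + l111 • phi ![1, 1, 1] = phi x :=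
  explicit_convex_coefficients_general x t ht₁ ht₂ l000 l001 l010 l011 l100 l101 l110 l111 h000 h001
    h010 h011 h100 h101 h110 h111
end

section
/- The point w = (1/4, 1/4, 1/2, 1/4, 1/4, 1/2) ∈ ℝ⁶ belongs to C₃, but there is no x ∈ [0,1]³ with φ(x) = w; hence C₃ is not contained in φ([0,1]³). -/
/-- The solid cube `H₃ = [0,1]³`. -/
def H3 : Set (Fin 3 → ℝ) := {x | ∀ i, x i ∈ Set.Icc (0 : ℝ) 1}

/-- `C₃`, the convex hull of the images under `φ` of the binary vertices. -/
noncomputable def C3 : Set (Fin 6 → ℝ) :=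
  convexHull ℝ (phi '' {p : Fin 3 → ℝ | ∀ i, p i = 0 ∨ p i = 1})

theorem phi_mem_C3 {p : Fin 3 → ℝ} (hp : ∀ i, p i = 0 ∨ p i = 1) : phi p ∈ C3 :=
  subset_convexHull ℝ _ ⟨p, hp, rfl⟩

theorem midpoint_phi_eq :
    midpoint ℝ (phi ![0, 0, 1]) (phi ![0, 1, 0]) =
      (![1 / 4, 1 / 4, 1 / 2, 1 / 4, 1 / 4, 1 / 2] : Fin 6 → ℝ) := by
  ext i
  fin_cases i <;> norm_num [midpoint_eq_smul_add, phi, Matrix.cons_val_two]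

theorem midpoint_phi_mem_C3 : midpoint ℝ (phi ![0, 0, 1]) (phi ![0, 1, 0]) ∈ C3 :=
  (convex_convexHull ℝ _).midpoint_mem
    (phi_mem_C3 (by simp [Fin.forall_fin_succ])) (phi_mem_C3 (by simp [Fin.forall_fin_succ]))

theorem notMem_range_phi :
    (![1 / 4, 1 / 4, 1 / 2, 1 / 4, 1 / 4, 1 / 2] : Fin 6 → ℝ) ∉ Set.range phi := by
  rintro ⟨x, h⟩
  have h01 : (x 0 + 2 * x 0 * x 1 + x 1) / 2 = 1 / 4 := congrFun h 0
  have h02 : (x 0 + 2 * x 0 * x 2 + x 2) / 2 = 1 / 4 := congrFun h 1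
  have h12 : (x 1 + 2 * x 1 * x 2 + x 2) / 2 = 1 / 2 := congrFun h 2
  have h01' : (x 0 - 2 * x 0 * x 1 + x 1) / 2 = 1 / 4 := congrFun h 3
  have h02' : (x 0 - 2 * x 0 * x 2 + x 2) / 2 = 1 / 4 := congrFun h 4
  have h12' : (x 1 - 2 * x 1 * x 2 + x 2) / 2 = 1 / 2 := congrFun h 5
  have hx1 : x 1 = 1 / 2 := by linarith
  have hx2 : x 2 = 1 / 2 := by linarith
  have hprod : x 1 * x 2 = 0 := by linarith
  rw [hx1, hx2] at hprod
  norm_num at hprod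

theorem C3_not_subset_phi_image :
    (![1 / 4, 1 / 4, 1 / 2, 1 / 4, 1 / 4, 1 / 2] : Fin 6 → ℝ) ∈ C3 ∧
    (¬ ∃ x ∈ H3, phi x = ![1 / 4, 1 / 4, 1 / 2, 1 / 4, 1 / 4, 1 / 2]) ∧
    ¬ C3 ⊆ phi '' H3 := by
  have hmem := midpoint_phi_eq ▸ midpoint_phi_mem_C3
  have hnot : ¬ ∃ x ∈ H3, phi x = ![1 / 4, 1 / 4, 1 / 2, 1 / 4, 1 / 4, 1 / 2] :=
    fun ⟨x, _, hx⟩ => notMem_range_phi ⟨x, hx⟩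
  exact ⟨hmem, hnot, fun hsub => hnot (hsub hmem)⟩
end

section
/- The set φ([0,1]³) ⊆ ℝ⁶ is not convex. -/
theorem phi_image_cube_not_convex :
    ¬ Convex ℝ (phi '' {x : Fin 3 → ℝ | ∀ i, x i ∈ Set.Icc (0 : ℝ) 1}) := by
  intro h
  have h0 : phi ![0,0,0] ∈ phi '' {x : Fin 3 → ℝ | ∀ i, x i ∈ Set.Icc (0 : ℝ) 1} :=
    ⟨![0,0,0], fun i => by fin_cases i <;> norm_num, rfl⟩
  have h1 : phi ![1,1,1] ∈ phi '' {x : Fin 3 → ℝ | ∀ i, x i ∈ Set.Icc (0 : ℝ) 1} :=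
    ⟨![1,1,1], fun i => by fin_cases i <;> norm_num, rfl⟩
  have hm := h h0 h1 (by norm_num : (0:ℝ) ≤ 1/2) (by norm_num : (0:ℝ) ≤ 1/2) (by norm_num)
  obtain ⟨x, hx, hphi⟩ := hm
  have e0 := congrFun hphi 0
  have e1 := congrFun hphi 1
  have e2 := congrFun hphi 2
  have e3 := congrFun hphi 3
  simp [phi, Matrix.cons_val_zero, Matrix.cons_val_one, Matrix.head_cons] at e0 e1 e2 e3
  nlinarith [e0, e1, e2, e3, sq_nonneg (x 0 - x 1), sq_nonneg (x 0 + x 1)]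
end

section
/- Let Q be a symmetric real 3×3 matrix with zero diagonal, b ∈ ℝ³, and f(x) = xᵀQx + bᵀx. Define the linear function f̃ : ℝ⁶ → ℝ on primary variables w = (u₁₂,u₁₃,u₂₃,v₁₂,v₁₃,v₂₃) by f̃(w) = Q₁₂(u₁₂−v₁₂) + Q₁₃(u₁₃−v₁₃) + Q₂₃(u₂₃−v₂₃) + b₁·(u₁₂+v₁₂+u₁₃+v₁₃−u₂₃−v₂₃)/2 + b₂·(u₁₂+v₁₂+u₂₃+v₂₃−u₁₃−v₁₃)/2 + b₃·(u₁₃+v₁₃+u₂₃+v₂₃−u₁₂−v₁₂)/2. Then the minimum value of f over [0,1]³ equals the minimum value of f̃ over C₃: if f attains its minimum over [0,1]³ at x* and f̃ attains its minimum over C₃ at w*, then f(x*) = f̃(w*). -/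
open Finset

lemma round01 (a t : ℝ) (h0 : 0 ≤ t) (h1 : t ≤ 1) :
    ∃ s : ℝ, (s = 0 ∨ s = 1) ∧ a * s ≤ a * t := by
  rcases le_or_gt 0 a with h | h
  · exact ⟨0, Or.inl rfl, by nlinarith⟩
  · exact ⟨1, Or.inr rfl, by nlinarith⟩

theorem min_quadratic_eq_min_linear_on_C3
    (Q : Matrix (Fin 3) (Fin 3) ℝ) (hQsymm : Q.IsSymm)
    (hQdiag : ∀ i, Q i i = 0) (b : Fin 3 → ℝ)
    (f : (Fin 3 → ℝ) → ℝ)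
    (hf : ∀ x, f x = (∑ i, ∑ j, Q i j * x i * x j) + ∑ i, b i * x i)
    (ftilde : (Fin 6 → ℝ) → ℝ)
    (hftilde : ∀ w, ftilde w =
      Q 0 1 * (w 0 - w 3) + Q 0 2 * (w 1 - w 4) + Q 1 2 * (w 2 - w 5) +
      b 0 * ((w 0 + w 3 + w 1 + w 4 - w 2 - w 5) / 2) +
      b 1 * ((w 0 + w 3 + w 2 + w 5 - w 1 - w 4) / 2) +
      b 2 * ((w 1 + w 4 + w 2 + w 5 - w 0 - w 3) / 2))
    (xstar : Fin 3 → ℝ) (hxstar : xstar ∈ H3)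
    (hxmin : ∀ x ∈ H3, f xstar ≤ f x)
    (wstar : Fin 6 → ℝ) (hwstar : wstar ∈ C3)
    (hwmin : ∀ w ∈ C3, ftilde wstar ≤ ftilde w) :
    f xstar = ftilde wstar := by
  have hsym01 : Q 1 0 = Q 0 1 := hQsymm.apply 0 1
  have hsym02 : Q 2 0 = Q 0 2 := hQsymm.apply 0 2
  have hsym12 : Q 2 1 = Q 1 2 := hQsymm.apply 1 2
  -- key identity: ftilde ∘ phi = f
  have hkey : ∀ x : Fin 3 → ℝ, ftilde (phi x) = f x := by
    intro x
    simp only [hf, hftilde, phi, Fin.sum_univ_three, Matrix.cons_val_zero,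
      Matrix.cons_val_one, Matrix.head_cons, Matrix.cons_val_two, Matrix.tail_cons,
      Matrix.cons_val_three, Matrix.cons_val_four, Matrix.cons_val_fin_one,
      hQdiag, hsym01, hsym02, hsym12]
    have h5 : (![(x 0 + 2 * x 0 * x 1 + x 1) / 2,
      (x 0 + 2 * x 0 * x 2 + x 2) / 2,
      (x 1 + 2 * x 1 * x 2 + x 2) / 2,
      (x 0 - 2 * x 0 * x 1 + x 1) / 2,
      (x 0 - 2 * x 0 * x 2 + x 2) / 2,
      (x 1 - 2 * x 1 * x 2 + x 2) / 2] : Fin 6 → ℝ) 5 = (x 1 - 2 * x 1 * x 2 + x 2) / 2 := rfl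
    rw [h5]
    ring
  -- explicit form of f
  have hF : ∀ x : Fin 3 → ℝ, f x =
      2 * Q 0 1 * x 0 * x 1 + 2 * Q 0 2 * x 0 * x 2 + 2 * Q 1 2 * x 1 * x 2 +
      b 0 * x 0 + b 1 * x 1 + b 2 * x 2 := by
    intro x
    simp only [hf, Fin.sum_univ_three, hQdiag, hsym01, hsym02, hsym12]
    ring
  set F : ℝ → ℝ → ℝ → ℝ := fun t0 t1 t2 =>
    2 * Q 0 1 * t0 * t1 + 2 * Q 0 2 * t0 * t2 + 2 * Q 1 2 * t1 * t2 +
    b 0 * t0 + b 1 * t1 + b 2 * t2 with hFdef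
  have hFx : ∀ x : Fin 3 → ℝ, f x = F (x 0) (x 1) (x 2) := fun x => hF x
  obtain ⟨ht0, ht1, ht2⟩ : (xstar 0 ∈ Set.Icc (0:ℝ) 1) ∧ (xstar 1 ∈ Set.Icc (0:ℝ) 1) ∧
      (xstar 2 ∈ Set.Icc (0:ℝ) 1) := ⟨hxstar 0, hxstar 1, hxstar 2⟩
  -- round coordinates
  obtain ⟨s0, hs0, hs0le⟩ := round01 (2 * Q 0 1 * xstar 1 + 2 * Q 0 2 * xstar 2 + b 0)
    (xstar 0) ht0.1 ht0.2
  have hs0mem : 0 ≤ s0 ∧ s0 ≤ 1 := by rcases hs0 with h | h <;> simp [h]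
  obtain ⟨s1, hs1, hs1le⟩ := round01 (2 * Q 0 1 * s0 + 2 * Q 1 2 * xstar 2 + b 1)
    (xstar 1) ht1.1 ht1.2
  obtain ⟨s2, hs2, hs2le⟩ := round01 (2 * Q 0 2 * s0 + 2 * Q 1 2 * s1 + b 2)
    (xstar 2) ht2.1 ht2.2
  have step1 : F s0 (xstar 1) (xstar 2) ≤ F (xstar 0) (xstar 1) (xstar 2) := by
    simp only [hFdef]; nlinarith [hs0le]
  have step2 : F s0 s1 (xstar 2) ≤ F s0 (xstar 1) (xstar 2) := by
    simp only [hFdef]; nlinarith [hs1le]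
  have step3 : F s0 s1 s2 ≤ F s0 s1 (xstar 2) := by
    simp only [hFdef]; nlinarith [hs2le]
  set p : Fin 3 → ℝ := ![s0, s1, s2] with hpdef
  have hpvert : ∀ i, p i = 0 ∨ p i = 1 := by
    intro i; fin_cases i <;> simpa [hpdef] using ‹_›
  have hpC3 : phi p ∈ C3 := subset_convexHull ℝ _ ⟨p, hpvert, rfl⟩
  have hfp : f p = F s0 s1 s2 := by
    rw [hFx]; simp [hpdef]
  -- direction ≤ : ftilde wstar ≤ f xstar
  have hle : ftilde wstar ≤ f xstar := by
    calc ftilde wstar ≤ ftilde (phi p) := hwmin _ hpC3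
      _ = f p := hkey p
      _ = F s0 s1 s2 := hfp
      _ ≤ F (xstar 0) (xstar 1) (xstar 2) := le_trans step3 (le_trans step2 step1)
      _ = f xstar := (hFx xstar).symm
  -- direction ≥ : f xstar ≤ ftilde wstar via convexity
  have hge : f xstar ≤ ftilde wstar := by
    have hsub : C3 ⊆ {w : Fin 6 → ℝ | f xstar ≤ ftilde w} := by
      apply convexHull_min
      · rintro _ ⟨q, hq, rfl⟩
        have hqH3 : q ∈ H3 := by
          intro i; rcases hq i with h | h <;> simp [h]
        have := hxmin q hqH3
        simpa [Set.mem_setOf_eq, hkey q] using this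
      · intro w1 hw1 w2 hw2 a c ha hc hac
        have hlin : ftilde (a • w1 + c • w2) = a * ftilde w1 + c * ftilde w2 := by
          simp only [hftilde, Pi.add_apply, Pi.smul_apply, smul_eq_mul]
          ring
        simp only [Set.mem_setOf_eq] at hw1 hw2 ⊢
        rw [hlin]
        have h1 : a * f xstar ≤ a * ftilde w1 := mul_le_mul_of_nonneg_left hw1 ha
        have h2 : c * f xstar ≤ c * ftilde w2 := mul_le_mul_of_nonneg_left hw2 hc
        have h3 : f xstar = a * f xstar + c * f xstar := by rw [← add_mul, hac, one_mul]
        linarith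
    exact hsub hwstar
  linarith
end

section
/- For every x ∈ [0,1]ⁿ, the vector Φ(x) belongs to C_n; that is: (a) for every triple 1 ≤ i < j < k ≤ n the 6-vector Φ(x)_{ijk} = (u_{ij}, u_{ik}, u_{jk}, v_{ij}, v_{ik}, v_{jk}) lies in convexHull ℝ (φ '' {0,1}³), and (b) for every index i the value g_{i,j,k}(Φ(x)) is the same for all pairs j < k with j ≠ i ≠ k. -/
/-- The primary variables `u_{ij} = (x_i + 2 x_i x_j + x_j)/2`. -/
noncomputable def U {m : ℕ} (x : Fin m → ℝ) (i j : Fin m) : ℝ :=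
  (x i + 2 * x i * x j + x j) / 2

/-- The primary variables `v_{ij} = (x_i − 2 x_i x_j + x_j)/2`. -/
noncomputable def V {m : ℕ} (x : Fin m → ℝ) (i j : Fin m) : ℝ :=
  (x i - 2 * x i * x j + x j) / 2

/-- `g_{i,j,k}(w) = (u_{ij}+v_{ij}+u_{ik}+v_{ik}−u_{jk}−v_{jk})/2`. -/
noncomputable def gFun {m : ℕ} (u v : Fin m → Fin m → ℝ) (i j k : Fin m) : ℝ :=
  (u i j + v i j + u i k + v i k - u j k - v j k) / 2

/-- The triple component `w_{ijk} = (u_{ij}, u_{ik}, u_{jk}, v_{ij}, v_{ik}, v_{jk})`. -/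
noncomputable def wTriple {m : ℕ} (u v : Fin m → Fin m → ℝ) (i j k : Fin m) :
    Fin 6 → ℝ :=
  ![u i j, u i k, u j k, v i j, v i k, v j k]

open Function

theorem mem_convexHull_image_binary_of_affine_in_each_coord {ι E : Type*} [Fintype ι]
    [DecidableEq ι] [AddCommGroup E] [Module ℝ E] (f : (ι → ℝ) → E)
    (hf : ∀ p i t, f (update p i t) = (1 - t) • f (update p i 0) + t • f (update p i 1))
    {p : ι → ℝ} (hp : ∀ i, p i ∈ Set.Icc (0 : ℝ) 1) :
    f p ∈ convexHull ℝ (f '' {q | ∀ i, q i = 0 ∨ q i = 1}) := by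
  suffices h : ∀ s : Finset ι, ∀ p : ι → ℝ, (∀ i, p i ∈ Set.Icc (0 : ℝ) 1) →
      (∀ i ∉ s, p i = 0 ∨ p i = 1) → f p ∈ convexHull ℝ (f '' {q | ∀ i, q i = 0 ∨ q i = 1}) from
    h Finset.univ p hp (by simp)
  intro s
  induction s using Finset.induction_on with
  | empty =>
    intro p _ hbin
    exact subset_convexHull ℝ _ ⟨p, fun i => hbin i (Finset.notMem_empty i), rfl⟩
  | insert a s _ ih =>
    intro p hp hbin
    have hend : ∀ t : ℝ, (t = 0 ∨ t = 1) →
        f (update p a t) ∈ convexHull ℝ (f '' {q | ∀ i, q i = 0 ∨ q i = 1}) := by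
      intro t ht
      refine ih _ (fun i => ?_) (fun i hi => ?_)
      · rcases eq_or_ne i a with rfl | hia
        · rcases ht with rfl | rfl <;> simp
        · simpa [hia] using hp i
      · rcases eq_or_ne i a with rfl | hia
        · simpa using ht
        · simpa [hia] using hbin i (by simp [hia, hi])
    have hsplit := hf p a (p a)
    rw [update_eq_self] at hsplit
    rw [hsplit]
    exact convex_convexHull ℝ _ (hend 0 (Or.inl rfl)) (hend 1 (Or.inr rfl))
      (sub_nonneg.2 (hp a).2) (hp a).1 (sub_add_cancel 1 _)

theorem phi_update (p : Fin 3 → ℝ) (i : Fin 3) (t : ℝ) :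
    phi (update p i t) = (1 - t) • phi (update p i 0) + t • phi (update p i 1) := by
  funext r
  fin_cases i <;> fin_cases r <;> simp [phi, update] <;> ring

theorem wTriple_U_V {m : ℕ} (x : Fin m → ℝ) (i j k : Fin m) :
    wTriple (U x) (V x) i j k = phi ![x i, x j, x k] := by
  funext r
  fin_cases r <;> rfl

theorem gFun_U_V {m : ℕ} (x : Fin m → ℝ) (i j k : Fin m) :
    gFun (U x) (V x) i j k = x i := by
  simp only [gFun, U, V]
  ring

theorem Phi_mem_Cn (n : ℕ) (x : Fin (n + 3) → ℝ)
    (hx : ∀ i, x i ∈ Set.Icc (0 : ℝ) 1) :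
    (∀ i j k : Fin (n + 3), i < j → j < k →
      wTriple (U x) (V x) i j k ∈
        convexHull ℝ (phi '' {p : Fin 3 → ℝ | ∀ i, p i = 0 ∨ p i = 1})) ∧
    (∀ i j k j' k' : Fin (n + 3), j < k → j ≠ i → k ≠ i →
      j' < k' → j' ≠ i → k' ≠ i →
      gFun (U x) (V x) i j k = gFun (U x) (V x) i j' k') := by
  refine ⟨fun i j k _ _ => ?_, fun i j k j' k' _ _ _ _ _ _ => ?_⟩
  · rw [wTriple_U_V]
    exact mem_convexHull_image_binary_of_affine_in_each_coord phi phi_update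
      (fun r => by fin_cases r <;> simp [hx])
  · rw [gFun_U_V, gFun_U_V]
end
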